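/- Under the same algorithmic setting (û^n = u^n, descent line search with parameter α > 0, λ_max < √(4/(3 δt L) − 1/2) − 1, h and f Lipschitz), assume in addition that E is level-bounded, i.e., {x : E(x) ≤ c} is bounded for every c ∈ ℝ. Then the sequence (A(u^{n+1}, u^n))_n is monotone decreasing and converges to some limit ζ ∈ ℝ, and the sequence (u^n)_n is bounded, where A(x,y) = E(x) + (L/2 + 1/(3δt))‖x − y‖². -/

import Mathlib

/-!
One iteration decreases the Lyapunov function `A`. Stationarity of `yⁿ` for `Eⁿ = Hⁿ - Fⁿ`,
convexity of `H` and the descent lemma for the `L`-smooth `F` give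
`Eⁿ(yⁿ) ≤ Eⁿ(uⁿ) - (4/(3δt) - L/2)‖yⁿ - uⁿ‖²`; the line search only lowers `Eⁿ` further, and the
bound on `λ_max` turns the gain into at least `L‖uⁿ⁺¹ - uⁿ‖²`. Expanding `Eⁿ` and absorbing the
cross terms by Cauchy–Schwarz then yields `A(uⁿ⁺¹, uⁿ) ≤ A(uⁿ, uⁿ⁻¹)`. As `A(x, y) ≥ E(x)` and a
continuous level-bounded `E` attains its minimum, the decreasing sequence converges, and every
iterate lies in one sublevel set of `E`.
-/

open scoped RealInnerProductSpace
open Filter Topology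

section GradientCalculus

variable {X : Type*} [NormedAddCommGroup X] [InnerProductSpace ℝ X] [CompleteSpace X]
  {Φ Ψ : X → ℝ} {φ : X → X} {g g' x : X}

lemma HasGradientAt.add (hΦ : HasGradientAt Φ g x) (hΨ : HasGradientAt Ψ g' x) :
    HasGradientAt (fun v => Φ v + Ψ v) (g + g') x := by
  rw [hasGradientAt_iff_hasFDerivAt] at *
  rw [map_add]
  exact hΦ.add hΨ

lemma HasGradientAt.sub (hΦ : HasGradientAt Φ g x) (hΨ : HasGradientAt Ψ g' x) :
    HasGradientAt (fun v => Φ v - Ψ v) (g - g') x := by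
  rw [hasGradientAt_iff_hasFDerivAt] at *
  rw [map_sub]
  exact hΦ.sub hΨ

lemma HasGradientAt.const_mul (hΦ : HasGradientAt Φ g x) (a : ℝ) :
    HasGradientAt (fun v => a * Φ v) (a • g) x := by
  rw [hasGradientAt_iff_hasFDerivAt] at *
  rw [map_smulₛₗ, RCLike.conj_to_real]
  exact hΦ.const_mul a

lemma hasGradientAt_of_hasFDerivAt {ℓ : X →L[ℝ] ℝ} (hΦ : HasFDerivAt Φ ℓ x)
    (hℓ : ∀ w, ℓ w = ⟪g, w⟫) : HasGradientAt Φ g x := by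
  rwa [hasGradientAt_iff_hasFDerivAt, show InnerProductSpace.toDual ℝ X g = ℓ from
    ContinuousLinearMap.ext fun w => (hℓ w).symm]

lemma hasGradientAt_norm_sub_sq (a x : X) :
    HasGradientAt (fun v => ‖v - a‖ ^ 2) ((2 : ℝ) • (x - a)) x :=
  hasGradientAt_of_hasFDerivAt ((hasFDerivAt_id x).sub_const a).norm_sq fun w => by
    simp [real_inner_smul_left, inner_sub_left]

lemma hasGradientAt_inner_sub (c a x : X) : HasGradientAt (fun v => ⟪c, v - a⟫) c x := by
  have : (fun v => ⟪c, v - a⟫) = fun v => innerSL ℝ c v - ⟪c, a⟫ := by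
    ext v; simp [inner_sub_right]
  rw [this]
  exact hasGradientAt_of_hasFDerivAt ((innerSL ℝ c).hasFDerivAt.sub_const _) fun w => by simp

lemma hasDerivAt_comp_add_smul {a d : X} {t : ℝ} (hΦ : HasGradientAt Φ g (a + t • d)) :
    HasDerivAt (fun s : ℝ => Φ (a + s • d)) ⟪g, d⟫ t := by
  have hline : HasDerivAt (fun s : ℝ => a + s • d) d t := by
    simpa using ((hasDerivAt_id t).smul_const d).const_add a
  simpa [Function.comp_def] using hΦ.hasFDerivAt.comp_hasDerivAt t hline

lemma ConvexOn.add_inner_le_of_hasGradientAt (hΦc : ConvexOn ℝ Set.univ Φ)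
    {a : X} (hΦ : HasGradientAt Φ g a) (b : X) : Φ a + ⟪g, b - a⟫ ≤ Φ b := by
  have hline : ConvexOn ℝ Set.univ fun s : ℝ => Φ (a + s • (b - a)) := by
    have hcomp : (fun s : ℝ => Φ (a + s • (b - a))) = Φ ∘ AffineMap.lineMap a b := by
      ext s
      simp [AffineMap.lineMap_apply, add_comm]
    simpa [hcomp] using hΦc.comp_affineMap (AffineMap.lineMap a b)
  have h0 : HasDerivAt (fun s : ℝ => Φ (a + s • (b - a))) ⟪g, b - a⟫ 0 :=
    hasDerivAt_comp_add_smul (by simpa using hΦ)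
  have := hline.le_slope_of_hasDerivAt (Set.mem_univ 0) (Set.mem_univ 1) zero_lt_one h0
  simp only [slope_def_field, one_smul, zero_smul, add_zero, add_sub_cancel] at this
  linarith

lemma add_inner_le_of_monotone_gradient (hΦ : ∀ x, HasGradientAt Φ (φ x) x)
    (hφ : ∀ x y, 0 ≤ ⟪φ x - φ y, x - y⟫) (a b : X) : Φ a + ⟪φ a, b - a⟫ ≤ Φ b := by
  have hderiv (t : ℝ) :
      HasDerivAt (fun s : ℝ => Φ (a + s • (b - a))) ⟪φ (a + t • (b - a)), b - a⟫ t :=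
    hasDerivAt_comp_add_smul (hΦ _)
  obtain ⟨ξ, hξ, hmvt⟩ := exists_hasDerivAt_eq_slope _ _ zero_lt_one
    (fun t _ => (hderiv t).continuousAt.continuousWithinAt) (fun t _ => hderiv t)
  simp only [one_smul, zero_smul, add_zero, add_sub_cancel, sub_zero, div_one] at hmvt
  have hmono : ξ * ⟪φ a, b - a⟫ ≤ ξ * ⟪φ (a + ξ • (b - a)), b - a⟫ := by
    simpa [real_inner_smul_right, inner_sub_left] using hφ (a + ξ • (b - a)) a
  nlinarith [hξ.1]

-- `L/2 ‖· - a‖² - Φ` has a monotone gradient, so it lies above its tangent plane at `a`.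
lemma le_add_inner_add_of_lipschitz_gradient {L : ℝ} (hΦ : ∀ x, HasGradientAt Φ (φ x) x)
    (hφ : ∀ x y, ‖φ x - φ y‖ ≤ L * ‖x - y‖) (a b : X) :
    Φ b ≤ Φ a + ⟪φ a, b - a⟫ + L / 2 * ‖b - a‖ ^ 2 := by
  have hΨ (x : X) : HasGradientAt (fun v => L / 2 * ‖v - a‖ ^ 2 - Φ v)
      ((L / 2) • (2 : ℝ) • (x - a) - φ x) x :=
    ((hasGradientAt_norm_sub_sq a x).const_mul _).sub (hΦ x)
  have hmono (x y : X) :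
      0 ≤ ⟪(L / 2) • (2 : ℝ) • (x - a) - φ x - ((L / 2) • (2 : ℝ) • (y - a) - φ y), x - y⟫ := by
    have hrw : (L / 2) • (2 : ℝ) • (x - a) - φ x - ((L / 2) • (2 : ℝ) • (y - a) - φ y)
        = L • (x - y) - (φ x - φ y) := by module
    rw [hrw, inner_sub_left, real_inner_smul_left, real_inner_self_eq_norm_sq]
    nlinarith [real_inner_le_norm (φ x - φ y) (x - y), hφ x y, norm_nonneg (x - y)]
  have := add_inner_le_of_monotone_gradient hΨ hmono a b
  simp only [sub_self, norm_zero, smul_zero, zero_sub, inner_neg_left] at this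
  nlinarith

end GradientCalculus

section DescentStep

variable {X : Type*} [NormedAddCommGroup X] [InnerProductSpace ℝ X]

/-- The surrogate energy `Eⁿ = Hⁿ - Fⁿ`, with `a = 1/δt`, `b = 1/(3δt)`, `p = uⁿ⁻¹`, `q = uⁿ`. -/
def surrogateEnergy (E : X → ℝ) (f : X → X) (a b : ℝ) (p q v : X) : ℝ :=
  E v + a * ‖v - q‖ ^ 2 - b * ‖v - p‖ ^ 2 + ⟪f q - f p, v - p⟫

lemma surrogateEnergy_le_of_stationary [CompleteSpace X] {H F E : X → ℝ} {f : X → X}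
    {g m p q z : X} {a b L : ℝ}
    (hHc : ConvexOn ℝ Set.univ H) (hH : HasGradientAt H g z)
    (hF : ∀ x, HasGradientAt F (f x) x) (hLip : ∀ x y, ‖f x - f y‖ ≤ L * ‖x - y‖)
    (hE : ∀ v, E v = H v + F v) (hm : 0 ≤ ⟪m, z - q⟫)
    (hstat : g + a • (2 : ℝ) • (z - q) - (b • (2 : ℝ) • (q - p) - f q - (f q - f p)) + m = 0) :
    surrogateEnergy E f a b p q z
      ≤ surrogateEnergy E f a b p q q - (a + b - L / 2) * ‖z - q‖ ^ 2 := by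
  have hHz := hHc.add_inner_le_of_hasGradientAt hH q
  have hFz := le_add_inner_add_of_lipschitz_gradient hF hLip q z
  have hstat' : ⟪g, z - q⟫ + 2 * a * ‖z - q‖ ^ 2 - 2 * b * ⟪q - p, z - q⟫ + ⟪f q, z - q⟫
      + ⟪f q - f p, z - q⟫ + ⟪m, z - q⟫ = 0 := by
    have := congrArg (fun w => ⟪w, z - q⟫) hstat
    generalize z - q = d at this ⊢
    simp only [inner_add_left, inner_sub_left, real_inner_smul_left, inner_zero_left,
      real_inner_self_eq_norm_sq] at this ⊢
    linarith
  have hzp : ‖z - p‖ ^ 2 = ‖q - p‖ ^ 2 + 2 * ⟪q - p, z - q⟫ + ‖z - q‖ ^ 2 := by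
    rw [← norm_add_sq_real]; congr 2; abel
  have hzp' : ⟪f q - f p, z - p⟫ = ⟪f q - f p, z - q⟫ + ⟪f q - f p, q - p⟫ := by
    rw [← inner_add_right]; congr 1; abel
  rw [← neg_sub z q, inner_neg_right] at hHz
  simp only [surrogateEnergy, hE, sub_self, norm_zero, hzp, hzp']
  linarith

lemma le_of_surrogateEnergy_add_le {E : X → ℝ} {f : X → X} {a b L : ℝ} {p q r : X}
    (hab : a = 3 * b) (hb : 0 ≤ b) (hL : 0 ≤ L) (hLip : ‖f q - f p‖ ≤ L * ‖q - p‖)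
    (hdec : surrogateEnergy E f a b p q r + L * ‖r - q‖ ^ 2 ≤ surrogateEnergy E f a b p q q) :
    E r + (L / 2 + b) * ‖r - q‖ ^ 2 ≤ E q + (L / 2 + b) * ‖q - p‖ ^ 2 := by
  have hrp : ‖r - p‖ ^ 2 = ‖q - p‖ ^ 2 + 2 * ⟪q - p, r - q⟫ + ‖r - q‖ ^ 2 := by
    rw [← norm_add_sq_real]; congr 2; abel
  have hrp' : ⟪f q - f p, r - p⟫ = ⟪f q - f p, r - q⟫ + ⟪f q - f p, q - p⟫ := by
    rw [← inner_add_right]; congr 1; abel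
  have hcs : 2 * ⟪q - p, r - q⟫ ≤ ‖q - p‖ ^ 2 + ‖r - q‖ ^ 2 := by
    nlinarith [real_inner_le_norm (q - p) (r - q), sq_nonneg (‖q - p‖ - ‖r - q‖)]
  have hcs' : -⟪f q - f p, r - q⟫ ≤ L / 2 * (‖q - p‖ ^ 2 + ‖r - q‖ ^ 2) := by
    have := neg_le_of_abs_le (abs_real_inner_le_norm (f q - f p) (r - q))
    nlinarith [mul_le_mul_of_nonneg_right hLip (norm_nonneg (r - q)),
      sq_nonneg (‖q - p‖ - ‖r - q‖)]
  simp only [surrogateEnergy, sub_self, norm_zero, hrp, hrp', hab] at hdec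
  linarith [mul_le_mul_of_nonneg_left hcs hb]

lemma lyapunov_le_of_descent_step [CompleteSpace X] {H F E Hn Fn En : X → ℝ} {h f : X → X}
    {m p q z : X} {L δt α lam : ℝ}
    (hH : ∀ x, HasGradientAt H (h x) x) (hHc : ConvexOn ℝ Set.univ H)
    (hF : ∀ x, HasGradientAt F (f x) x) (hL : 0 < L) (hLip : ∀ x y, ‖f x - f y‖ ≤ L * ‖x - y‖)
    (hδt : 0 < δt) (hE : ∀ v, E v = H v + F v)
    (hHn : ∀ v, Hn v = H v + (1 / δt) * ‖v - q‖ ^ 2)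
    (hFn : ∀ v, Fn v = (1 / (3 * δt)) * ‖v - p‖ ^ 2 - F v - ⟪f q - f p, v - p⟫)
    (hEn : ∀ v, En v = Hn v - Fn v)
    (hopt : gradient Hn z - gradient Fn q + m = 0) (hm : 0 ≤ ⟪m, z - q⟫)
    (hα : 0 ≤ α) (hlam : 0 ≤ lam) (hlamBound : lam < √(4 / (3 * δt * L) - 1 / 2) - 1)
    (hls : En (z + lam • (z - q)) ≤ En z - α * lam * ‖z - q‖ ^ 2) :
    E (z + lam • (z - q)) + (L / 2 + 1 / (3 * δt)) * ‖z + lam • (z - q) - q‖ ^ 2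
      ≤ E q + (L / 2 + 1 / (3 * δt)) * ‖q - p‖ ^ 2 := by
  have hgradH : gradient Hn z = h z + (1 / δt) • (2 : ℝ) • (z - q) := by
    rw [funext hHn]
    exact ((hH z).add ((hasGradientAt_norm_sub_sq q z).const_mul _)).gradient
  have hgradF : gradient Fn q = (1 / (3 * δt)) • (2 : ℝ) • (q - p) - f q - (f q - f p) := by
    rw [funext hFn]
    exact ((((hasGradientAt_norm_sub_sq p q).const_mul _).sub (hF q)).sub
      (hasGradientAt_inner_sub _ p q)).gradient
  have hEn_eq (v : X) : En v = surrogateEnergy E f (1 / δt) (1 / (3 * δt)) p q v := by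
    simp only [hEn, hHn, hFn, hE, surrogateEnergy]
    ring
  rw [hgradH, hgradF] at hopt
  have hzq := surrogateEnergy_le_of_stationary hHc (hH z) hF hLip hE hm hopt
  have hstep : L * ‖z + lam • (z - q) - q‖ ^ 2
      ≤ (1 / δt + 1 / (3 * δt) - L / 2) * ‖z - q‖ ^ 2 := by
    have hsq : (1 + lam) ^ 2 < 4 / (3 * δt * L) - 1 / 2 :=
      (Real.lt_sqrt (by linarith)).1 (by linarith)
    have hcoef : L * (1 + lam) ^ 2 ≤ 1 / δt + 1 / (3 * δt) - L / 2 := by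
      have := mul_lt_mul_of_pos_left hsq hL
      field_simp at this ⊢
      linarith
    rw [show z + lam • (z - q) - q = (1 + lam) • (z - q) by module, norm_smul, mul_pow,
      Real.norm_eq_abs, sq_abs, ← mul_assoc]
    exact mul_le_mul_of_nonneg_right hcoef (sq_nonneg _)
  refine le_of_surrogateEnergy_add_le (a := 1 / δt) (by field_simp) (by positivity)
    hL.le (hLip q p) ?_
  rw [hEn_eq, hEn_eq] at hls
  linarith [mul_nonneg (mul_nonneg hα hlam) (sq_nonneg ‖z - q‖)]

end DescentStep

lemma exists_forall_le_of_isBounded_sublevel {X : Type*} [PseudoMetricSpace X] [ProperSpace X]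
    [Nonempty X] {E : X → ℝ} (hE : Continuous E)
    (hlevel : ∀ c : ℝ, Bornology.IsBounded {x : X | E x ≤ c}) : ∃ x₀, ∀ x, E x₀ ≤ E x := by
  refine hE.exists_forall_le (Metric.cobounded_eq_cocompact (α := X) ▸ tendsto_atTop.2 fun c => ?_)
  filter_upwards [Bornology.isBounded_def.1 (hlevel c)] with x hx
  exact (not_le.1 (Set.notMem_ofPred_iff.1 hx)).le

theorem A_decreasing_and_bounded_un_general
    {X : Type*} [NormedAddCommGroup X] [InnerProductSpace ℝ X] [FiniteDimensional ℝ X]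
    (H : X → ℝ) (h : X → X) (hH : ∀ x : X, HasGradientAt H (h x) x)
    (hHconv : ConvexOn ℝ Set.univ H)
    (F : X → ℝ) (f : X → X) (hF : ∀ x : X, HasGradientAt F (f x) x)
    (L : ℝ) (hL : 0 < L) (hLip : ∀ x y : X, ‖f x - f y‖ ≤ L * ‖x - y‖)
    (δt : ℝ) (hδt : 0 < δt)
    (M : X →L[ℝ] X)
    (hMpsd : ∀ x : X, 0 ≤ ⟪M x, x⟫)
    (u y : ℕ → X) (lam : ℕ → ℝ) (α : ℝ) (hα : 0 < α)
    (Hn Fn En : ℕ → X → ℝ)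
    (hHn : ∀ n : ℕ, ∀ v : X, Hn n v = H v + (1 / δt) * ‖v - u n‖ ^ 2)
    (hFn : ∀ n : ℕ, ∀ v : X, Fn n v = (1 / (3 * δt)) * ‖v - u (n - 1)‖ ^ 2 - F v
      - ⟪f (u n) - f (u (n - 1)), v - u (n - 1)⟫)
    (hEn : ∀ n : ℕ, ∀ v : X, En n v = Hn n v - Fn n v)
    (hopt : ∀ n : ℕ, gradient (Hn n) (y n) - gradient (Fn n) (u n) + M (y n - u n) = 0)
    (hlam0 : ∀ n : ℕ, 0 ≤ lam n)
    (hls : ∀ n : ℕ, En n (y n + lam n • (y n - u n))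
      ≤ En n (y n) - α * lam n * ‖y n - u n‖ ^ 2)
    (hupd : ∀ n : ℕ, u (n + 1) = y n + lam n • (y n - u n))
    (E : X → ℝ) (hE : ∀ v : X, E v = H v + F v)
    (hlevel : ∀ c : ℝ, Bornology.IsBounded {x : X | E x ≤ c})
    (lamMax : ℝ) (hlamMax : ∀ n : ℕ, lam n ≤ lamMax)
    (hlamBound : lamMax < Real.sqrt (4 / (3 * δt * L) - 1 / 2) - 1)
    (Afun : X → X → ℝ)
    (hAfun : ∀ x y : X, Afun x y = E x + (L / 2 + 1 / (3 * δt)) * ‖x - y‖ ^ 2) :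
    (Antitone fun n : ℕ => Afun (u (n + 1)) (u n)) ∧
    (∃ ζ : ℝ, Tendsto (fun n : ℕ => Afun (u (n + 1)) (u n)) atTop (𝓝 ζ)) ∧
    Bornology.IsBounded (Set.range u) := by
  have hanti : Antitone fun n : ℕ => Afun (u (n + 1)) (u n) := by
    refine antitone_nat_of_succ_le fun n => ?_
    rw [hAfun, hAfun, hupd (n + 1)]
    exact lyapunov_le_of_descent_step hH hHconv hF hL hLip hδt hE (hHn (n + 1))
      (by simpa using hFn (n + 1)) (hEn (n + 1)) (hopt (n + 1)) (hMpsd _) hα.le (hlam0 _)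
      ((hlamMax _).trans_lt hlamBound) (hls (n + 1))
  have hE_le (n : ℕ) : E (u (n + 1)) ≤ Afun (u (n + 1)) (u n) := by
    rw [hAfun]
    have : 0 ≤ (L / 2 + 1 / (3 * δt)) * ‖u (n + 1) - u n‖ ^ 2 := by positivity
    linarith
  have hEcont : Continuous E := by
    rw [funext hE]
    exact continuous_iff_continuousAt.2 fun v => (hH v).continuousAt.add (hF v).continuousAt
  obtain ⟨x₀, hx₀⟩ := exists_forall_le_of_isBounded_sublevel hEcont hlevel
  have hrange : Set.range u ⊆ {x | E x ≤ Afun (u 1) (u 0)} ∪ {u 0} := by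
    rintro _ ⟨_ | n, rfl⟩
    exacts [Or.inr rfl, Or.inl ((hE_le n).trans (hanti n.zero_le))]
  refine ⟨hanti, ⟨_, tendsto_atTop_ciInf hanti ⟨E x₀, ?_⟩⟩,
    ((hlevel _).union Bornology.isBounded_singleton).subset hrange⟩
  rintro _ ⟨n, rfl⟩
  exact (hx₀ _).trans (hE_le n)

/-- Under the algorithmic setting with `ûⁿ = uⁿ` and level-boundedness of
`E`, the sequence `A(uⁿ⁺¹, uⁿ)` is monotone decreasing and converges to some limit `ζ`, and
the iterate sequence `(uⁿ)` is bounded. -/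
theorem A_decreasing_and_bounded_un
    {X : Type*} [NormedAddCommGroup X] [InnerProductSpace ℝ X] [FiniteDimensional ℝ X]
    (H : X → ℝ) (h : X → X) (hH : ∀ x : X, HasGradientAt H (h x) x)
    (hHconv : ConvexOn ℝ Set.univ H)
    (F : X → ℝ) (f : X → X) (hF : ∀ x : X, HasGradientAt F (f x) x)
    (L : ℝ) (hL : 0 < L) (hLip : ∀ x y : X, ‖f x - f y‖ ≤ L * ‖x - y‖)
    (Lh : ℝ) (hLh : 0 ≤ Lh) (hhLip : ∀ x y : X, ‖h x - h y‖ ≤ Lh * ‖x - y‖)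
    (δt : ℝ) (hδt : 0 < δt) (hδt2 : δt < 2 / (3 * L))
    (M : X →L[ℝ] X) (hMsym : ∀ x y : X, ⟪M x, y⟫ = ⟪x, M y⟫)
    (hMpsd : ∀ x : X, 0 ≤ ⟪M x, x⟫)
    (u y : ℕ → X) (lam : ℕ → ℝ) (α : ℝ) (hα : 0 < α)
    (Hn Fn En : ℕ → X → ℝ)
    (hHn : ∀ n : ℕ, ∀ v : X, Hn n v = H v + (1 / δt) * ‖v - u n‖ ^ 2)
    (hFn : ∀ n : ℕ, ∀ v : X, Fn n v = (1 / (3 * δt)) * ‖v - u (n - 1)‖ ^ 2 - F v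
      - ⟪f (u n) - f (u (n - 1)), v - u (n - 1)⟫)
    (hEn : ∀ n : ℕ, ∀ v : X, En n v = Hn n v - Fn n v)
    (hopt : ∀ n : ℕ, gradient (Hn n) (y n) - gradient (Fn n) (u n) + M (y n - u n) = 0)
    (hlam0 : ∀ n : ℕ, 0 ≤ lam n)
    (hls : ∀ n : ℕ, En n (y n + lam n • (y n - u n))
      ≤ En n (y n) - α * lam n * ‖y n - u n‖ ^ 2)
    (hupd : ∀ n : ℕ, u (n + 1) = y n + lam n • (y n - u n))
    (E : X → ℝ) (hE : ∀ v : X, E v = H v + F v)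
    (hlevel : ∀ c : ℝ, Bornology.IsBounded {x : X | E x ≤ c})
    (lamMax : ℝ) (hlamMax : ∀ n : ℕ, lam n ≤ lamMax)
    (hlamBound : lamMax < Real.sqrt (4 / (3 * δt * L) - 1 / 2) - 1)
    (Afun : X → X → ℝ)
    (hAfun : ∀ x y : X, Afun x y = E x + (L / 2 + 1 / (3 * δt)) * ‖x - y‖ ^ 2) :
    (Antitone fun n : ℕ => Afun (u (n + 1)) (u n)) ∧
    (∃ ζ : ℝ, Tendsto (fun n : ℕ => Afun (u (n + 1)) (u n)) atTop (𝓝 ζ)) ∧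
    Bornology.IsBounded (Set.range u) :=
  A_decreasing_and_bounded_un_general H h hH hHconv F f hF L hL hLip δt hδt M hMpsd u y lam α hα Hn
    Fn En hHn hFn hEn hopt hlam0 hls hupd E hE hlevel lamMax hlamMax hlamBound Afun hAfun
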